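/- If a definite Horn formula F is equivalent to a single-head definite Horn formula F' that contains the clause P → x, then F contains a clause P' → x such that F ⊨ P ≡ P', i.e., F ∪ P ⊨ P' and F ∪ P' ⊨ P. -/
import Mathlib


/-- A literal is a variable with a polarity (`true` = positive). A clause is a
finite set of literals. -/
abbrev Clause (V : Type) := Finset (V × Bool)

/-- A formula is a (finite) set of clauses, read as a conjunction of disjunctions. -/
abbrev Formula (V : Type) := Finset (Clause V)

variable {V : Type} [DecidableEq V]

/-- An assignment satisfies a clause if it makes some literal of it true. -/
def clauseSat (a : V → Bool) (c : Clause V) : Prop := ∃ l ∈ c, a l.1 = l.2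

/-- An assignment satisfies a formula if it satisfies all its clauses. -/
def satF (a : V → Bool) (F : Formula V) : Prop := ∀ c ∈ F, clauseSat a c

/-- Entailment: every model of `A` is a model of `B`. -/
def entails (A B : Formula V) : Prop := ∀ a : V → Bool, satF a A → satF a B

/-- Satisfiability. -/
def satisfiable (F : Formula V) : Prop := ∃ a : V → Bool, satF a F

/-- The set of variables occurring (positively or negatively) in a formula. -/
def vars (F : Formula V) : Set V := {v | ∃ c ∈ F, ∃ b : Bool, (v, b) ∈ c}

/-- Common equivalence: same consequences on the common variables. -/
def commonEquiv (A B : Formula V) : Prop :=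
  ∀ C : Formula V, vars C ⊆ vars A ∩ vars B → (entails A C ↔ entails B C)

/-- An assignment satisfies a set of literals (viewed as unit clauses). -/
def satLits (a : V → Bool) (S : Set (V × Bool)) : Prop := ∀ l ∈ S, a l.1 = l.2

/-- A clause is Horn if it has at most one positive literal. -/
def hornClause (c : Clause V) : Prop := (c.filter (fun l => l.2 = true)).card ≤ 1

/-- A formula is Horn if all its clauses are. -/
def hornFormula (F : Formula V) : Prop := ∀ c ∈ F, hornClause c

/-- A clause is definite Horn if it has exactly one positive literal. -/
def definiteClause (c : Clause V) : Prop := (c.filter (fun l => l.2 = true)).card = 1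

/-- A formula is definite Horn if all its clauses are. -/
def definiteHorn (F : Formula V) : Prop := ∀ c ∈ F, definiteClause c

/-- The size of a formula: total number of literal occurrences. -/
def fsize (F : Formula V) : ℕ := ∑ c ∈ F, c.card

/-- The set of variables `P` as a set of positive unit clauses. -/
def unitsOf (P : Finset V) : Formula V := P.image (fun p => ({(p, true)} : Clause V))

/-- The definite Horn clause `P → x`. -/
def dClause (P : Finset V) (x : V) : Clause V :=
  P.image (fun p => ((p, false) : V × Bool)) ∪ {(x, true)}

/-- `F ⊨ P`: the formula entails every variable of `P`. -/
def entailsV (F : Formula V) (P : Finset V) : Prop := entails F (unitsOf P)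

/-- A definite Horn formula is single-head if no two distinct clauses share a head. -/
def singleHead (F : Formula V) : Prop :=
  ∀ (P P' : Finset V) (x : V), x ∉ P → x ∉ P' →
    dClause P x ∈ F → dClause P' x ∈ F → P = P'

/-- The body of a clause: its negated variables. -/
def body (c : Clause V) : Finset V := (c.filter (fun l => l.2 = false)).image Prod.fst

/-- `F^x`: the clauses of `F` containing neither `x` nor `¬x`. -/
def restr (F : Formula V) (x : V) : Formula V :=
  F.filter (fun c => ((x, true) : V × Bool) ∉ c ∧ ((x, false) : V × Bool) ∉ c)

/-- `F[⊥/x]`: delete the clauses containing `¬x`, remove the literal `x` elsewhere. -/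
def substFalse (F : Formula V) (x : V) : Formula V :=
  (F.filter (fun c => ((x, false) : V × Bool) ∉ c)).image (fun c => c.erase (x, true))

/-- `newvar P x F`: summarize the body part `P` by the new variable `x`. -/
def newvar (P : Finset V) (x : V) (F : Formula V) : Formula V :=
  ((F.filter (fun c => ∀ p ∈ P, ((p, false) : V × Bool) ∈ c)).image
      (fun c => (c \ P.image (fun p => ((p, false) : V × Bool))) ∪ {((x, false) : V × Bool)}))
    ∪ (F.filter (fun c => ¬ ∀ p ∈ P, ((p, false) : V × Bool) ∈ c))
    ∪ {dClause P x}

section AuxLemmas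

lemma satF_union' {a : V → Bool} {F G : Formula V} :
    satF a (F ∪ G) ↔ satF a F ∧ satF a G := by
  constructor
  · intro h
    exact ⟨fun c hc => h c (Finset.mem_union_left _ hc),
           fun c hc => h c (Finset.mem_union_right _ hc)⟩
  · intro h c hc
    rcases Finset.mem_union.mp hc with h' | h'
    · exact h.1 c h'
    · exact h.2 c h'

lemma satF_unitsOf' {a : V → Bool} {P : Finset V} :
    satF a (unitsOf P) ↔ ∀ p ∈ P, a p = true := by
  constructor
  · intro h p hp
    obtain ⟨l, hl, hal⟩ := h {(p, true)} (Finset.mem_image_of_mem _ hp)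
    rw [Finset.mem_singleton] at hl
    subst hl
    exact hal
  · intro h c hc
    obtain ⟨p, hp, rfl⟩ := Finset.mem_image.mp hc
    exact ⟨(p, true), Finset.mem_singleton_self _, h p hp⟩

lemma mem_body' {c : Clause V} {v : V} : v ∈ body c ↔ (v, false) ∈ c := by
  constructor
  · intro h
    obtain ⟨l, hl, hlv⟩ := Finset.mem_image.mp h
    rw [Finset.mem_filter] at hl
    have : l = (v, false) := by
      obtain ⟨a, b⟩ := l
      simp only at hlv hl
      rw [hlv, hl.2]
    exact this ▸ hl.1
  · intro h
    exact Finset.mem_image.mpr ⟨(v, false), Finset.mem_filter.mpr ⟨h, rfl⟩, rfl⟩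

lemma definite_head {c : Clause V} (hc : definiteClause c) :
    ∃ y, (y, true) ∈ c ∧ ∀ l ∈ c, l.2 = true → l = (y, true) := by
  obtain ⟨l, hl⟩ := Finset.card_eq_one.mp hc
  have hlm : l ∈ c.filter (fun l => l.2 = true) := hl ▸ Finset.mem_singleton_self l
  rw [Finset.mem_filter] at hlm
  obtain ⟨y, b⟩ := l
  obtain ⟨hlc, hb⟩ := hlm
  simp only at hb
  subst hb
  refine ⟨y, hlc, fun m hm hm2 => ?_⟩
  have : m ∈ c.filter (fun l => l.2 = true) := Finset.mem_filter.mpr ⟨hm, hm2⟩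
  rw [hl, Finset.mem_singleton] at this
  exact this

lemma clauseSat_definite {a : V → Bool} {c : Clause V} {y : V}
    (hy1 : (y, true) ∈ c) (hy2 : ∀ l ∈ c, l.2 = true → l = (y, true)) :
    clauseSat a c ↔ a y = true ∨ ∃ v ∈ body c, a v = false := by
  constructor
  · rintro ⟨⟨v, b⟩, hvc, hav⟩
    cases b with
    | false => exact Or.inr ⟨v, mem_body'.mpr hvc, hav⟩
    | true =>
      have h := hy2 _ hvc rfl
      rw [Prod.mk.injEq] at h
      exact Or.inl (h.1 ▸ hav)
  · rintro (h | ⟨v, hv, hav⟩)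
    · exact ⟨(y, true), hy1, h⟩
    · exact ⟨(v, false), mem_body'.mp hv, hav⟩

lemma definite_eq_dClause {c : Clause V} {y : V}
    (hy1 : (y, true) ∈ c) (hy2 : ∀ l ∈ c, l.2 = true → l = (y, true)) :
    c = dClause (body c) y := by
  ext ⟨v, b⟩
  simp only [dClause, Finset.mem_union, Finset.mem_image, Finset.mem_singleton]
  constructor
  · intro h
    cases b with
    | false => exact Or.inl ⟨v, mem_body'.mpr h, rfl⟩
    | true => exact Or.inr (hy2 _ h rfl)
  · rintro (⟨p, hp, hpe⟩ | h)
    · rw [Prod.mk.injEq] at hpe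
      rw [← hpe.1, ← hpe.2]
      exact mem_body'.mp hp
    · exact h ▸ hy1

lemma clauseSat_dClause' {a : V → Bool} {P : Finset V} {x : V} :
    clauseSat a (dClause P x) ↔ (∃ p ∈ P, a p = false) ∨ a x = true := by
  constructor
  · rintro ⟨l, hl, hal⟩
    rcases Finset.mem_union.mp hl with h | h
    · obtain ⟨p, hp, rfl⟩ := Finset.mem_image.mp h
      exact Or.inl ⟨p, hp, hal⟩
    · rw [Finset.mem_singleton] at h
      subst h
      exact Or.inr hal
  · rintro (⟨p, hp, hap⟩ | h)
    · exact ⟨(p, false), Finset.mem_union_left _ (Finset.mem_image_of_mem _ hp), hap⟩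
    · exact ⟨(x, true), Finset.mem_union_right _ (Finset.mem_singleton_self _), h⟩

end AuxLemmas

/-- if a definite Horn formula `F` is equivalent to a single-head
definite Horn formula `F'` containing `P → x`, then `F` contains a clause
`P' → x` with `F ⊨ P ≡ P'`. -/
theorem equivalent_preconditions (F F' : Formula V)
    (hF : definiteHorn F) (hF' : definiteHorn F') (hsh : singleHead F')
    (h1 : entails F F') (h2 : entails F' F)
    (P : Finset V) (x : V) (hxP : x ∉ P) (hPx : dClause P x ∈ F') :
    ∃ P' : Finset V, x ∉ P' ∧ dClause P' x ∈ F ∧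
      entailsV (F ∪ unitsOf P) P' ∧ entailsV (F ∪ unitsOf P') P := by
  classical
  -- inT v : F ∪ P entails v
  set inT : V → Prop := fun v => ∀ a : V → Bool, satF a F → (∀ p ∈ P, a p = true) →
    a v = true with hinT
  have hTx : inT x := by
    intro a haF haP
    have haF' := h1 a haF
    rcases clauseSat_dClause'.mp (haF' _ hPx) with ⟨p, hp, hap⟩ | h
    · rw [haP p hp] at hap; cases hap
    · exact h
  -- find a clause of F with head x, body entailed by F ∪ P, x not in the body
  have hex : ∃ c ∈ F, ((x, true) ∈ c ∧ ∀ l ∈ c, l.2 = true → l = (x, true)) ∧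
      x ∉ body c ∧ ∀ v ∈ body c, inT v := by
    by_contra hne
    push_neg at hne
    set b0 : V → Bool := fun v => decide (inT v ∧ v ≠ x) with hb0
    have hb0F : satF b0 F := by
      intro c hc
      obtain ⟨y, hy1, hy2⟩ := definite_head (hF c hc)
      rw [clauseSat_definite hy1 hy2]
      by_cases hb : ∀ v ∈ body c, inT v ∧ v ≠ x
      · by_cases hyx : y = x
        · exfalso
          have hxb : x ∉ body c := fun h => (hb _ h).2 (hyx ▸ rfl)
          obtain ⟨v, hv, hnv⟩ := hne c hc ⟨hyx ▸ hy1, fun l hl h2 => hyx ▸ hy2 l hl h2⟩ hxb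
          exact hnv (hb v hv).1
        · left
          have hTy : inT y := by
            intro a haF haP
            rcases (clauseSat_definite hy1 hy2).mp (haF c hc) with h | ⟨v, hv, hav⟩
            · exact h
            · exfalso
              rw [(hb v hv).1 a haF haP] at hav
              cases hav
          exact decide_eq_true ⟨hTy, hyx⟩
      · push_neg at hb
        obtain ⟨v, hv, hnv⟩ := hb
        exact Or.inr ⟨v, hv, decide_eq_false fun h => h.2 (hnv h.1)⟩
    have hb0P : ∀ p ∈ P, b0 p = true := by
      intro p hp
      have hpx : p ≠ x := fun h => hxP (h ▸ hp)
      exact decide_eq_true ⟨fun a _ haP => haP p hp, hpx⟩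
    have hxt := hTx b0 hb0F hb0P
    have : (inT x ∧ x ≠ x) := of_decide_eq_true hxt
    exact this.2 rfl
  obtain ⟨c, hc, ⟨hy1, hy2⟩, hxb, hcT⟩ := hex
  set P' : Finset V := body c with hP'
  -- inU v : F ∪ P' entails v
  set inU : V → Prop := fun v => ∀ a : V → Bool, satF a F → (∀ p ∈ P', a p = true) →
    a v = true with hinU
  have hUx : inU x := by
    intro a haF haP'
    rcases (clauseSat_definite hy1 hy2).mp (haF c hc) with h | ⟨v, hv, hav⟩
    · exact h
    · rw [haP' v hv] at hav; cases hav
  have hPU : ∀ p ∈ P, inU p := by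
    by_contra hne2
    push_neg at hne2
    obtain ⟨p0, hp0, hnp0⟩ := hne2
    set b1 : V → Bool := fun v => decide (inU v ∧ v ≠ x) with hb1
    have hb1F' : satF b1 F' := by
      intro d hd
      obtain ⟨y, hy1', hy2'⟩ := definite_head (hF' d hd)
      rw [clauseSat_definite hy1' hy2']
      by_cases hb : ∀ v ∈ body d, inU v ∧ v ≠ x
      · by_cases hyx : y = x
        · exfalso
          have hxb' : x ∉ body d := fun h => (hb _ h).2 (hyx ▸ rfl)
          have hde : d = dClause (body d) x := hyx ▸ definite_eq_dClause hy1' hy2'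
          have hbd : body d = P := hsh (body d) P x hxb' hxP (hde ▸ hd) hPx
          exact hnp0 (hb p0 (hbd.symm ▸ hp0)).1
        · left
          have hUy : inU y := by
            intro a haF haP'
            rcases (clauseSat_definite hy1' hy2').mp (h1 a haF d hd) with h | ⟨v, hv, hav⟩
            · exact h
            · exfalso
              rw [(hb v hv).1 a haF haP'] at hav
              cases hav
          exact decide_eq_true ⟨hUy, hyx⟩
      · push_neg at hb
        obtain ⟨v, hv, hnv⟩ := hb
        exact Or.inr ⟨v, hv, decide_eq_false fun h => h.2 (hnv h.1)⟩
    have hb1F : satF b1 F := h2 b1 hb1F'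
    have hb1P' : ∀ q ∈ P', b1 q = true := by
      intro q hq
      have hqx : q ≠ x := fun h => hxb (h ▸ hq)
      exact decide_eq_true ⟨fun a _ haP' => haP' q hq, hqx⟩
    have hxt := hUx b1 hb1F hb1P'
    have : (inU x ∧ x ≠ x) := of_decide_eq_true hxt
    exact this.2 rfl
  refine ⟨P', hxb, ?_, ?_, ?_⟩
  · exact (definite_eq_dClause hy1 hy2) ▸ hc
  · intro a ha
    rw [satF_unitsOf']
    obtain ⟨haF, haP⟩ := satF_union'.mp ha
    rw [satF_unitsOf'] at haP
    exact fun v hv => hcT v hv a haF haP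
  · intro a ha
    rw [satF_unitsOf']
    obtain ⟨haF, haP'⟩ := satF_union'.mp ha
    rw [satF_unitsOf'] at haP'
    exact fun p hp => hPU p hp a haF haP'
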